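/- arXiv:1305.0154 — 4 statements merged into one kernel-verified Lean document; each statement's English description precedes it below -/
import Mathlib

section
/- Let φ : ℝ → ℝ be an increasing homeomorphism (a continuous, strictly increasing bijection of ℝ onto ℝ) and let M be its Lebesgue–Stieltjes measure. Fix x ∈ ℝ and t > 0, and let γ_t denote the centered Gaussian measure on ℝ with variance t. Then for every nonnegative Borel-measurable function f : ℝ → [0,∞], ∫_ℝ f( φ⁻¹( φ(x) + b ) ) dγ_t(b) = ∫_ℝ f(y) · (2πt)^{−1/2} · exp( −(φ(x) − φ(y))²/(2t) ) dM(y). (This says that the boundary Liouville Brownian motion φ⁻¹(φ(x)+B_t) has heat kernel p_t(x,y) = (2πt)^{−1/2} exp(−d(x,y)²/(2t)) with respect to the volume form M, where d(x,y) = |φ(x) − φ(y)|.) -/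
open MeasureTheory ProbabilityTheory Set Real

/-- Heat-kernel formula for the boundary Liouville Brownian motion: if `φ` is an
increasing homeomorphism of `ℝ` with inverse `ψ` and Lebesgue–Stieltjes measure
`M` (so `M((a,b]) = φ(b) - φ(a)`), `x ∈ ℝ`, `t > 0`, and `γ_t` is the centered
Gaussian measure of variance `t`, then for every nonnegative Borel `f`,
`∫ f(φ⁻¹(φ(x) + b)) dγ_t(b) = ∫ f(y) (2πt)^{-1/2} exp(-(φ(x)-φ(y))²/(2t)) dM(y)`. -/
theorem boundary_liouville_heat_kernel
    (φ ψ : ℝ → ℝ) (hmono : StrictMono φ) (hcont : Continuous φ)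
    (hsurj : Function.Surjective φ)
    (hψφ : ∀ x, ψ (φ x) = x) (hφψ : ∀ y, φ (ψ y) = y)
    (M : Measure ℝ)
    (hM : ∀ a b : ℝ, a ≤ b → M (Set.Ioc a b) = ENNReal.ofReal (φ b - φ a))
    (x t : ℝ) (ht : 0 < t)
    (f : ℝ → ENNReal) (hf : Measurable f) :
    ∫⁻ b, f (ψ (φ x + b)) ∂(gaussianReal 0 t.toNNReal) =
      ∫⁻ y, f y * ENNReal.ofReal ((2 * π * t) ^ (-(1 : ℝ) / 2) *
        Real.exp (-(φ x - φ y) ^ 2 / (2 * t))) ∂M := by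
  set v : NNReal := t.toNNReal with hv
  have hvt : (v : ℝ) = t := Real.coe_toNNReal t ht.le
  have hv0 : v ≠ 0 := by
    simp only [hv, ne_eq, Real.toNNReal_eq_zero, not_le]
    exact ht
  -- ψ properties
  have hψmono : StrictMono ψ := fun a b hab => by
    rw [← hmono.lt_iff_lt, hφψ, hφψ]; exact hab
  have hψmeas : Measurable ψ := hψmono.monotone.measurable
  have hφmeas : Measurable φ := hcont.measurable
  -- pushforward of M under φ is Lebesgue measure
  have hmap : Measure.map φ M = volume := by
    refine Measure.ext_of_Ioc' _ _ (fun a b hab => ?_) (fun a b hab => ?_)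
    · rw [Measure.map_apply hφmeas measurableSet_Ioc]
      have : φ ⁻¹' Set.Ioc a b = Set.Ioc (ψ a) (ψ b) := by
        ext y
        simp only [mem_preimage, mem_Ioc]
        constructor
        · rintro ⟨h1, h2⟩
          constructor
          · have := hψmono h1; rwa [hψφ] at this
          · have := hψmono.monotone h2; rwa [hψφ] at this
        · rintro ⟨h1, h2⟩
          constructor
          · have := hmono h1; rwa [hφψ] at this
          · have := hmono.monotone h2; rwa [hφψ] at this
      rw [this, hM _ _ (hψmono.monotone hab.le)]
      exact ENNReal.ofReal_ne_top
    · rw [Measure.map_apply hφmeas measurableSet_Ioc]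
      have : φ ⁻¹' Set.Ioc a b = Set.Ioc (ψ a) (ψ b) := by
        ext y
        simp only [mem_preimage, mem_Ioc]
        constructor
        · rintro ⟨h1, h2⟩
          constructor
          · have := hψmono h1; rwa [hψφ] at this
          · have := hψmono.monotone h2; rwa [hψφ] at this
        · rintro ⟨h1, h2⟩
          constructor
          · have := hmono h1; rwa [hφψ] at this
          · have := hmono.monotone h2; rwa [hφψ] at this
      rw [this, hM _ _ (hψmono.monotone hab.le), hφψ, hφψ,
        Real.volume_Ioc]
  -- the pdf identity
  have hpdf : ∀ u : ℝ, gaussianPDF 0 v (u - φ x) =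
      ENNReal.ofReal ((2 * π * t) ^ (-(1 : ℝ) / 2) *
        Real.exp (-(φ x - u) ^ 2 / (2 * t))) := by
    intro u
    rw [gaussianPDF, gaussianPDFReal]
    congr 1
    have h2πt : (0 : ℝ) ≤ 2 * π * t := by positivity
    have hs : (2 * π * t) ^ (-(1 : ℝ) / 2) = (√(2 * π * t))⁻¹ := by
      rw [neg_div, Real.rpow_neg h2πt, Real.sqrt_eq_rpow]
    rw [hvt, hs]
    congr 2
    ring
  -- rewrite gaussian as density
  rw [gaussianReal_of_var_ne_zero 0 hv0]
  have hgm : Measurable (gaussianPDF 0 v) := measurable_gaussianPDF 0 v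
  have hfun : Measurable fun b => f (ψ (φ x + b)) :=
    hf.comp (hψmeas.comp (measurable_const_add (φ x)))
  rw [lintegral_withDensity_eq_lintegral_mul _ hgm hfun]
  -- translation invariance
  have htrans : ∫⁻ b, gaussianPDF 0 v b * f (ψ (φ x + b)) =
      ∫⁻ u, gaussianPDF 0 v (u - φ x) * f (ψ u) := by
    have := lintegral_add_right_eq_self (μ := volume)
      (fun u => gaussianPDF 0 v (u - φ x) * f (ψ u)) (φ x)
    rw [← this]
    refine lintegral_congr fun b => ?_
    simp only [add_sub_cancel_right, add_comm]
  rw [show (fun b => (gaussianPDF 0 v * fun b => f (ψ (φ x + b))) b) =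
      fun b => gaussianPDF 0 v b * f (ψ (φ x + b)) from rfl, htrans]
  -- change of variables with the pushforward
  have hgmeas : Measurable fun u => gaussianPDF 0 v (u - φ x) * f (ψ u) :=
    ((hgm.comp (measurable_id.sub measurable_const)).mul (hf.comp hψmeas))
  rw [← hmap, lintegral_map hgmeas hφmeas]
  refine lintegral_congr fun y => ?_
  rw [hψφ, hpdf (φ y), mul_comm]
end

section
/- For every m > 0 there exist a bounded continuous function g_m : [0,∞) → ℝ and constants C, c > 0 with |g_m(r)| ≤ C·e^{−c r} for all r ≥ 1, such that for every r > 0: ∫₀^∞ exp( −m²u/2 − r²/(2u) ) (2u)^{−1} du = ln₊(1/r) + g_m(r). (This is the decomposition of the covariance kernel G_m(x,y) of the whole-plane massive Gaussian free field with mass m, with r = |x−y|, into a logarithmic singularity plus a continuous bounded remainder decaying exponentially at infinity.) -/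
open MeasureTheory Set Real Filter Topology

/-!
Split the integrand `g m r u = exp (-m²u/2 - r²/(2u)) / (2u)` as the remainder
`g m r u - (g 0 r u - g 0 1 u)` plus the massless difference `g 0 r u - g 0 1 u`.
The massless difference integrates to `-log r` by Frullani's integral, since
`g 0 r u = (2u)⁻¹ f (2u/r²)` with `f x = exp (-x⁻¹)`. The remainder is dominated by
`C / (1 + u²)` locally uniformly in `r`, so its integral is continuous in `r`, and
`g_m r := ∫ remainder - log (max 1 r)` absorbs `log (max 1 r) - log r = ln₊ (1/r)`.
For `r ≥ 1` completing the square, `m²u/2 + r²/(2u) - |m|r/2 - m²u/4 - 1/(4u) =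
((|m|u - r)² + r² - 1)/(4u) ≥ 0`, gives exponential decay; boundedness then follows
from continuity on `[0, 1]`.
-/

lemma mul_exp_neg_le_one (y : ℝ) : y * exp (-y) ≤ 1 :=
  (mul_exp_neg_le_exp_neg_one y).trans (exp_le_one_iff.2 (by norm_num))

lemma abs_exp_neg_sub_exp_neg_le {a b : ℝ} (ha : 0 ≤ a) (hb : 0 ≤ b) :
    |exp (-a) - exp (-b)| ≤ a + b := by
  have := one_sub_le_exp_neg a
  have := one_sub_le_exp_neg b
  have := exp_le_one_iff.2 (neg_nonpos.2 ha)
  have := exp_le_one_iff.2 (neg_nonpos.2 hb)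
  rw [abs_le]
  constructor <;> linarith

lemma le_mul_inv_one_add_sq {u y a b : ℝ} (hu : 0 < u) (hy : 0 ≤ y) (ha : 0 ≤ a)
    (hb : 0 ≤ b) (h₁ : u ≤ 1 → y ≤ a) (h₂ : 1 < u → y ≤ b / u ^ 2) :
    y ≤ 2 * (a + b) * (1 + u ^ 2)⁻¹ := by
  rw [← div_eq_mul_inv, le_div_iff₀ (by positivity)]
  rcases le_or_gt u 1 with hu1 | hu1
  · nlinarith [h₁ hu1, mul_le_mul_of_nonneg_left (pow_le_one₀ hu.le hu1 : u ^ 2 ≤ 1) hy]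
  · have := h₂ hu1
    rw [le_div_iff₀ (by positivity)] at this
    nlinarith [mul_le_mul_of_nonneg_left (one_le_pow₀ hu1.le : 1 ≤ u ^ 2) hy]

lemma integrableOn_Ioi_of_abs_le_mul_inv_one_add_sq {f : ℝ → ℝ} (hf : Measurable f) (A : ℝ)
    (h : ∀ u, 0 < u → |f u| ≤ A * (1 + u ^ 2)⁻¹) : IntegrableOn f (Ioi 0) :=
  (integrable_inv_one_add_sq.const_mul A).integrableOn.mono' hf.aestronglyMeasurable
    ((ae_restrict_iff' measurableSet_Ioi).2 (ae_of_all _ h))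

noncomputable def greenIntegrand (m r u : ℝ) : ℝ :=
  exp (-m ^ 2 * u / 2 - r ^ 2 / (2 * u)) * (2 * u)⁻¹

noncomputable def greenRemainderIntegrand (m r u : ℝ) : ℝ :=
  greenIntegrand m r u - (greenIntegrand 0 r u - greenIntegrand 0 1 u)

noncomputable def greenRemainder (m r : ℝ) : ℝ :=
  (∫ u in Ioi 0, greenRemainderIntegrand m r u) - log (max 1 r)

lemma measurable_greenIntegrand (m r : ℝ) : Measurable (greenIntegrand m r) := by
  unfold greenIntegrand; fun_prop

lemma measurable_greenRemainderIntegrand (m r : ℝ) : Measurable (greenRemainderIntegrand m r) :=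
  (measurable_greenIntegrand m r).sub
    ((measurable_greenIntegrand 0 r).sub (measurable_greenIntegrand 0 1))

lemma continuous_greenRemainderIntegrand (m u : ℝ) :
    Continuous fun r ↦ greenRemainderIntegrand m r u := by
  unfold greenRemainderIntegrand greenIntegrand; fun_prop

lemma greenIntegrand_eq_exp_mul_exp (m r u : ℝ) :
    greenIntegrand m r u = exp (-(m ^ 2 * u / 2)) * exp (-(r ^ 2 / (2 * u))) * (2 * u)⁻¹ := by
  rw [greenIntegrand, ← exp_add]; ring_nf

lemma greenIntegrand_nonneg (m r : ℝ) {u : ℝ} (hu : 0 ≤ u) : 0 ≤ greenIntegrand m r u := by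
  unfold greenIntegrand; positivity

lemma sq_mul_greenIntegrand_le_one (m r : ℝ) {u : ℝ} (hu : 0 < u) :
    r ^ 2 * greenIntegrand m r u ≤ 1 := by
  calc r ^ 2 * greenIntegrand m r u
      = exp (-(m ^ 2 * u / 2)) * (r ^ 2 / (2 * u) * exp (-(r ^ 2 / (2 * u)))) := by
        rw [greenIntegrand_eq_exp_mul_exp]; ring
    _ ≤ 1 * 1 := by
        gcongr
        · exact exp_le_one_iff.2 (by nlinarith [sq_nonneg m])
        · exact mul_exp_neg_le_one _
    _ = 1 := one_mul 1

lemma sq_mul_sq_mul_greenIntegrand_le_one (m r : ℝ) {u : ℝ} (hu : 0 < u) :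
    (m * u) ^ 2 * greenIntegrand m r u ≤ 1 := by
  calc (m * u) ^ 2 * greenIntegrand m r u
      = m ^ 2 * u / 2 * exp (-(m ^ 2 * u / 2)) * exp (-(r ^ 2 / (2 * u))) := by
        rw [greenIntegrand_eq_exp_mul_exp]; field_simp
    _ ≤ 1 * 1 := by
        gcongr
        · exact mul_exp_neg_le_one _
        · exact exp_le_one_iff.2 (neg_nonpos.2 (by positivity))
    _ = 1 := one_mul 1

lemma abs_greenIntegrand_sub_greenIntegrand_zero_le (m r : ℝ) {u : ℝ} (hu : 0 < u) :
    |greenIntegrand m r u - greenIntegrand 0 r u| ≤ m ^ 2 / 4 := by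
  have hm : 0 ≤ m ^ 2 * u / 2 := by positivity
  calc |greenIntegrand m r u - greenIntegrand 0 r u|
      = |exp (-(r ^ 2 / (2 * u))) * (exp (-(m ^ 2 * u / 2)) - exp (-0)) * (2 * u)⁻¹| := by
        simp only [greenIntegrand_eq_exp_mul_exp]; ring_nf
    _ = exp (-(r ^ 2 / (2 * u))) * |exp (-(m ^ 2 * u / 2)) - exp (-0)| * (2 * u)⁻¹ := by
        rw [abs_mul, abs_mul, abs_of_pos (exp_pos _), abs_of_pos (by positivity : 0 < (2 * u)⁻¹)]
    _ ≤ 1 * (m ^ 2 * u / 2 + 0) * (2 * u)⁻¹ := by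
        gcongr
        · exact exp_le_one_iff.2 (neg_nonpos.2 (by positivity))
        · exact abs_exp_neg_sub_exp_neg_le hm le_rfl
    _ = m ^ 2 / 4 := by field_simp; ring

lemma abs_greenIntegrand_zero_sub_le (r s : ℝ) {u : ℝ} (hu : 0 < u) :
    |greenIntegrand 0 r u - greenIntegrand 0 s u| ≤ (r ^ 2 + s ^ 2) / (2 * u) ^ 2 := by
  calc |greenIntegrand 0 r u - greenIntegrand 0 s u|
      = |(exp (-(r ^ 2 / (2 * u))) - exp (-(s ^ 2 / (2 * u)))) * (2 * u)⁻¹| := by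
        simp only [greenIntegrand_eq_exp_mul_exp, zero_pow two_ne_zero, zero_mul, zero_div,
          neg_zero, exp_zero]
        ring_nf
    _ = |exp (-(r ^ 2 / (2 * u))) - exp (-(s ^ 2 / (2 * u)))| * (2 * u)⁻¹ := by
        rw [abs_mul, abs_of_pos (by positivity : 0 < (2 * u)⁻¹)]
    _ ≤ (r ^ 2 / (2 * u) + s ^ 2 / (2 * u)) * (2 * u)⁻¹ := by
        gcongr
        exact abs_exp_neg_sub_exp_neg_le (by positivity) (by positivity)
    _ = (r ^ 2 + s ^ 2) / (2 * u) ^ 2 := by field_simp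

lemma greenIntegrand_le {m r : ℝ} (hm : m ≠ 0) (hr : r ≠ 0) {u : ℝ} (hu : 0 < u) :
    greenIntegrand m r u ≤ 2 * (1 / r ^ 2 + 1 / m ^ 2) * (1 + u ^ 2)⁻¹ := by
  refine le_mul_inv_one_add_sq hu (greenIntegrand_nonneg m r hu.le) (by positivity)
    (by positivity) (fun _ ↦ ?_) (fun _ ↦ ?_)
  · exact (le_div_iff₀' (by positivity)).2 (sq_mul_greenIntegrand_le_one m r hu)
  · rw [div_div, ← mul_pow]
    exact (le_div_iff₀' (by positivity)).2 (sq_mul_sq_mul_greenIntegrand_le_one m r hu)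

lemma abs_greenRemainderIntegrand_le {m r R : ℝ} (hm : m ≠ 0) (hr : |r| ≤ R) {u : ℝ}
    (hu : 0 < u) :
    |greenRemainderIntegrand m r u| ≤
      2 * ((m ^ 2 / 4 + 1) + (1 / m ^ 2 + (R ^ 2 + 1) / 4)) * (1 + u ^ 2)⁻¹ := by
  refine le_mul_inv_one_add_sq hu (abs_nonneg _) (by positivity) (by positivity)
    (fun _ ↦ ?_) (fun _ ↦ ?_)
  · calc |greenRemainderIntegrand m r u|
        ≤ |greenIntegrand m r u - greenIntegrand 0 r u| + |greenIntegrand 0 1 u| := by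
          rw [greenRemainderIntegrand, ← sub_add]; exact abs_add_le _ _
      _ ≤ m ^ 2 / 4 + 1 := by
          gcongr
          · exact abs_greenIntegrand_sub_greenIntegrand_zero_le m r hu
          · simpa [abs_of_nonneg (greenIntegrand_nonneg 0 1 hu.le)] using
              sq_mul_greenIntegrand_le_one 0 1 hu
  · have hR : r ^ 2 ≤ R ^ 2 := by simpa using pow_le_pow_left₀ (abs_nonneg r) hr 2
    calc |greenRemainderIntegrand m r u|
        ≤ |greenIntegrand m r u| + |greenIntegrand 0 r u - greenIntegrand 0 1 u| :=
          abs_sub _ _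
      _ ≤ 1 / (m * u) ^ 2 + (r ^ 2 + 1 ^ 2) / (2 * u) ^ 2 := by
          gcongr
          · rw [abs_of_nonneg (greenIntegrand_nonneg m r hu.le)]
            exact (le_div_iff₀' (by positivity)).2 (sq_mul_sq_mul_greenIntegrand_le_one m r hu)
          · exact abs_greenIntegrand_zero_sub_le r 1 hu
      _ ≤ 1 / (m * u) ^ 2 + (R ^ 2 + 1 ^ 2) / (2 * u) ^ 2 := by gcongr
      _ = (1 / m ^ 2 + (R ^ 2 + 1) / 4) / u ^ 2 := by field_simp; ring

lemma integrableOn_greenIntegrand {m r : ℝ} (hm : m ≠ 0) (hr : r ≠ 0) :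
    IntegrableOn (greenIntegrand m r) (Ioi 0) :=
  integrableOn_Ioi_of_abs_le_mul_inv_one_add_sq (measurable_greenIntegrand m r) _ fun _ hu ↦ by
    rw [abs_of_nonneg (greenIntegrand_nonneg m r hu.le)]; exact greenIntegrand_le hm hr hu

lemma integrableOn_greenRemainderIntegrand {m : ℝ} (hm : m ≠ 0) (r : ℝ) :
    IntegrableOn (greenRemainderIntegrand m r) (Ioi 0) :=
  integrableOn_Ioi_of_abs_le_mul_inv_one_add_sq (measurable_greenRemainderIntegrand m r) _
    fun _ hu ↦ abs_greenRemainderIntegrand_le hm le_rfl hu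

lemma integrableOn_greenIntegrand_zero_sub {r : ℝ} (hr : r ≠ 0) :
    IntegrableOn (fun u ↦ greenIntegrand 0 r u - greenIntegrand 0 1 u) (Ioi 0) :=
  ((integrableOn_greenIntegrand one_ne_zero hr).sub
    (integrableOn_greenRemainderIntegrand one_ne_zero r)).congr_fun
    (fun u _ ↦ by simp only [Pi.sub_apply, greenRemainderIntegrand, sub_sub_cancel])
    measurableSet_Ioi

lemma greenIntegrand_zero (r u : ℝ) :
    greenIntegrand 0 r u = 2⁻¹ * (u⁻¹ * exp (-((2 / r ^ 2) * u)⁻¹)) := by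
  rw [greenIntegrand, mul_inv (2 / r ^ 2), inv_div]; ring_nf

lemma integral_greenIntegrand_zero_sub {r : ℝ} (hr : 0 < r) :
    ∫ u in Ioi 0, (greenIntegrand 0 r u - greenIntegrand 0 1 u) = -log r := by
  set f : ℝ → ℝ := fun x ↦ exp (-x⁻¹)
  have hf : LocallyIntegrableOn f (Ioi 0) := by
    refine ContinuousOn.locallyIntegrableOn ?_ measurableSet_Ioi
    fun_prop (disch := exact fun x hx ↦ ne_of_gt hx)
  have hf0 : Tendsto f (𝓝[>] 0) (𝓝 0) :=
    tendsto_exp_atBot.comp (tendsto_neg_atTop_atBot.comp tendsto_inv_nhdsGT_zero)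
  have hftop : Tendsto f atTop (𝓝 1) := by
    simpa [f, Function.comp_def] using (continuous_exp.tendsto _).comp tendsto_inv_atTop_zero.neg
  have hdiff : ∀ u, greenIntegrand 0 r u - greenIntegrand 0 1 u =
      2⁻¹ * (u⁻¹ • (f ((2 / r ^ 2) * u) - f (2 * u))) := by
    intro u; simp only [greenIntegrand_zero, f, smul_eq_mul, one_pow, div_one]; ring
  have hint : IntegrableOn (fun u ↦ u⁻¹ • (f ((2 / r ^ 2) * u) - f (2 * u))) (Ioi 0) :=
    IntegrableOn.congr_fun ((integrableOn_greenIntegrand_zero_sub hr.ne').const_mul 2)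
      (fun u _ ↦ by simp only [hdiff]; ring) measurableSet_Ioi
  simp_rw [hdiff]
  rw [integral_const_mul, Frullani.integral_Ioi_eq hf (by positivity) two_pos hf0 hftop hint,
    show (2 : ℝ) / (2 / r ^ 2) = r ^ 2 by field_simp, log_pow, smul_eq_mul]
  push_cast
  ring

lemma continuous_greenRemainder {m : ℝ} (hm : m ≠ 0) : Continuous (greenRemainder m) := by
  refine Continuous.sub (continuous_iff_continuousAt.2 fun r₀ ↦ ?_)
    (continuousOn_log.comp_continuous (continuous_const.max continuous_id)
      fun r ↦ (zero_lt_one.trans_le (le_max_left 1 r)).ne')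
  refine continuousAt_of_dominated
    (Eventually.of_forall fun r ↦ (measurable_greenRemainderIntegrand m r).aestronglyMeasurable)
    ?_ (integrable_inv_one_add_sq.const_mul
      (2 * ((m ^ 2 / 4 + 1) + (1 / m ^ 2 + ((|r₀| + 1) ^ 2 + 1) / 4)))).integrableOn
    (Eventually.of_forall fun u ↦ (continuous_greenRemainderIntegrand m u).continuousAt)
  filter_upwards [Metric.ball_mem_nhds r₀ one_pos] with r hr
  refine (ae_restrict_iff' measurableSet_Ioi).2 (ae_of_all _ fun u hu ↦ ?_)
  refine abs_greenRemainderIntegrand_le hm (R := |r₀| + 1) ?_ hu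
  have := abs_sub_abs_le_abs_sub r r₀
  rw [Metric.mem_ball, dist_eq] at hr
  linarith

lemma integral_greenIntegrand {m r : ℝ} (hm : m ≠ 0) (hr : 0 < r) :
    ∫ u in Ioi 0, greenIntegrand m r u = max 0 (log (1 / r)) + greenRemainder m r := by
  have hsplit : ∀ u, greenIntegrand m r u =
      greenRemainderIntegrand m r u + (greenIntegrand 0 r u - greenIntegrand 0 1 u) := fun u ↦ by
    rw [greenRemainderIntegrand]; ring
  simp_rw [hsplit]
  rw [integral_add (integrableOn_greenRemainderIntegrand hm r)
      (integrableOn_greenIntegrand_zero_sub hr.ne'),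
    integral_greenIntegrand_zero_sub hr, greenRemainder, one_div, log_inv]
  rcases le_total r 1 with h | h
  · rw [max_eq_left h, log_one, max_eq_right (neg_nonneg.2 (log_nonpos hr.le h))]; ring
  · rw [max_eq_right h, max_eq_left (neg_nonpos.2 (log_nonneg h))]; ring

lemma greenIntegrand_le_exp_mul (m : ℝ) {r : ℝ} (hr : 1 ≤ r) {u : ℝ} (hu : 0 < u) :
    greenIntegrand m r u ≤ exp (-(|m| / 2) * r) * greenIntegrand (m / √2) (1 / √2) u := by
  have hsq : ∀ x : ℝ, (x / √2) ^ 2 = x ^ 2 / 2 := fun x ↦ by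
    rw [div_pow, sq_sqrt zero_le_two]
  rw [greenIntegrand, greenIntegrand, ← mul_assoc, ← exp_add, hsq, hsq]
  gcongr
  have key : -(|m| / 2) * r + (-(m ^ 2 / 2) * u / 2 - 1 ^ 2 / 2 / (2 * u)) -
      (-m ^ 2 * u / 2 - r ^ 2 / (2 * u)) = ((|m| * u - r) ^ 2 + (r ^ 2 - 1)) / (4 * u) := by
    rw [← sq_abs m]; field_simp; ring
  have : 0 ≤ ((|m| * u - r) ^ 2 + (r ^ 2 - 1)) / (4 * u) := by
    have : 1 ≤ r ^ 2 := one_le_pow₀ hr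
    positivity
  linarith

lemma exists_abs_greenRemainder_le_exp {m : ℝ} (hm : m ≠ 0) :
    ∃ C > 0, ∀ r, 1 ≤ r → |greenRemainder m r| ≤ C * exp (-(|m| / 2) * r) := by
  set K := ∫ u in Ioi 0, greenIntegrand (m / √2) (1 / √2) u
  have hK : 0 ≤ K :=
    setIntegral_nonneg measurableSet_Ioi fun u hu ↦ greenIntegrand_nonneg _ _ (le_of_lt hu)
  refine ⟨K + 1, by positivity, fun r hr ↦ ?_⟩
  have hr₀ : 0 < r := one_pos.trans_le hr
  have hgm : greenRemainder m r = ∫ u in Ioi 0, greenIntegrand m r u := by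
    rw [integral_greenIntegrand hm hr₀, one_div, log_inv,
      max_eq_left (neg_nonpos.2 (log_nonneg hr)), zero_add]
  rw [hgm, abs_of_nonneg (setIntegral_nonneg measurableSet_Ioi
    fun u hu ↦ greenIntegrand_nonneg m r (le_of_lt hu))]
  calc ∫ u in Ioi 0, greenIntegrand m r u
      ≤ ∫ u in Ioi 0, exp (-(|m| / 2) * r) * greenIntegrand (m / √2) (1 / √2) u :=
        setIntegral_mono_on (integrableOn_greenIntegrand hm hr₀.ne')
          ((integrableOn_greenIntegrand (by positivity) (by positivity)).const_mul _)
          measurableSet_Ioi fun u hu ↦ greenIntegrand_le_exp_mul m hr hu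
    _ = K * exp (-(|m| / 2) * r) := by rw [integral_const_mul, mul_comm]
    _ ≤ (K + 1) * exp (-(|m| / 2) * r) := by gcongr; linarith

lemma exists_abs_greenRemainder_le {m : ℝ} (hm : m ≠ 0) :
    ∃ B, ∀ r, 0 ≤ r → |greenRemainder m r| ≤ B := by
  obtain ⟨B, hB⟩ := (isCompact_Icc (a := (0 : ℝ)) (b := 1)).exists_bound_of_continuousOn
    (continuous_greenRemainder hm).continuousOn
  obtain ⟨C, hC₀, hC⟩ := exists_abs_greenRemainder_le_exp hm
  refine ⟨max B C, fun r hr ↦ ?_⟩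
  rcases le_total r 1 with h | h
  · exact (hB r ⟨hr, h⟩).trans (le_max_left B C)
  · calc |greenRemainder m r| ≤ C * exp (-(|m| / 2) * r) := hC r h
      _ ≤ C * 1 := by
        gcongr
        exact exp_le_one_iff.2 (by have := abs_nonneg m; nlinarith)
      _ ≤ max B C := by simp

/-- Decomposition of the covariance kernel of the whole-plane massive Gaussian
free field: for every `m > 0` there are a bounded function `g_m`, continuous on
`[0,∞)`, and constants `C, c > 0` with `|g_m(r)| ≤ C e^{-c r}` for `r ≥ 1`, such
that for all `r > 0`,
`∫₀^∞ exp(-m²u/2 - r²/(2u)) (2u)⁻¹ du = ln₊(1/r) + g_m(r)`. -/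
theorem massive_green_function_decomposition (m : ℝ) (hm : 0 < m) :
    ∃ (gm : ℝ → ℝ) (C c : ℝ),
      ContinuousOn gm (Set.Ici (0 : ℝ)) ∧
      (∃ Cb : ℝ, ∀ r : ℝ, 0 ≤ r → |gm r| ≤ Cb) ∧
      0 < C ∧ 0 < c ∧
      (∀ r : ℝ, 1 ≤ r → |gm r| ≤ C * Real.exp (-c * r)) ∧
      (∀ r : ℝ, 0 < r →
        (∫ u in Set.Ioi (0 : ℝ),
            Real.exp (-m ^ 2 * u / 2 - r ^ 2 / (2 * u)) * (2 * u)⁻¹) =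
          max 0 (Real.log (1 / r)) + gm r) := by
  obtain ⟨C, hC, hdecay⟩ := exists_abs_greenRemainder_le_exp hm.ne'
  exact ⟨greenRemainder m, C, |m| / 2, (continuous_greenRemainder hm.ne').continuousOn,
    exists_abs_greenRemainder_le hm.ne', hC, by positivity, hdecay,
    fun r hr ↦ integral_greenIntegrand hm.ne' hr⟩
end

section
/- For every β > 0 there is a constant C(β) > 0 (one may take C(β) = Σ_{n≥0} (1 + n·ln 2) · 2^{(−n+1)β}) such that the following holds: for every Borel measure μ on ℝ², every y ∈ ℝ², every K ≥ 0 and every t ∈ (0,1], if μ( B(y,r) ) ≤ K·r^β for all r ∈ (0,2], then ∫_{B(y, t^{1/2})} ( 1 + ln( t^{1/2}/|z−y| ) ) dμ(z) ≤ C(β)·K·t^{β/2}. -/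
/-! Since `log (s / d) ≤ log 2 · #{n | d ≤ s / 2ⁿ}`, the integrand is dominated pointwise by
`1 + log 2 · ∑ₙ 𝟙_{B(y, s / 2ⁿ)}` (at `z = y` the sum is infinite). Integrating and using
`μ (B(y, s / 2ⁿ)) ≤ K sᵝ 2^{-nβ}` gives the bound with `C = 1 + log 2 / (1 - 2^{-β})`. -/

open MeasureTheory Set Real

theorem one_sub_two_rpow_neg_pos {β : ℝ} (hβ : 0 < β) : 0 < 1 - (2 : ℝ) ^ (-β) :=
  sub_pos.2 (rpow_lt_one_of_one_lt_of_neg one_lt_two (neg_neg_of_pos hβ))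

section

open Metric

variable {X : Type*} [PseudoMetricSpace X]

theorem ofReal_log_div_dist_le_tsum_indicator {s : ℝ} (hs : 0 ≤ s) (y z : X) :
    ENNReal.ofReal (log (s / dist z y)) ≤
      ∑' n : ℕ, (closedBall y (s / 2 ^ n)).indicator (fun _ ↦ ENNReal.ofReal (log 2)) z := by
  set N := ⌈logb 2 (s / dist z y)⌉₊
  have h_mem : ∀ n < N, z ∈ closedBall y (s / 2 ^ n) := by
    intro n hn
    have hn : (n : ℝ) < logb 2 (s / dist z y) := Nat.lt_ceil.1 hn
    have hpos : 0 < s / dist z y := by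
      refine (div_nonneg hs dist_nonneg).lt_of_ne fun h ↦ ?_
      rw [← h, logb_zero] at hn
      exact hn.not_ge n.cast_nonneg
    have hd : 0 < dist z y := dist_nonneg.lt_of_ne fun h ↦ by simp [← h] at hpos
    have h2n : (2 : ℝ) ^ n < s / dist z y := by
      simpa using (lt_logb_iff_rpow_lt one_lt_two hpos).1 hn
    rw [mem_closedBall, le_div_iff₀ (by positivity)]
    rw [lt_div_iff₀ hd] at h2n
    linarith
  calc ENNReal.ofReal (log (s / dist z y))
      = ENNReal.ofReal (logb 2 (s / dist z y) * log 2) := by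
        rw [← log_div_log, div_mul_cancel₀ _ (log_pos one_lt_two).ne']
    _ ≤ ENNReal.ofReal (N * log 2) := by gcongr; exact Nat.le_ceil _
    _ = ∑ n ∈ Finset.range N, (closedBall y (s / 2 ^ n)).indicator
          (fun _ ↦ ENNReal.ofReal (log 2)) z := by
        rw [Finset.sum_congr rfl fun n hn ↦ indicator_of_mem (h_mem n (Finset.mem_range.1 hn)) _,
          Finset.sum_const, Finset.card_range, nsmul_eq_mul, ENNReal.ofReal_mul (by positivity),
          ENNReal.ofReal_natCast]
    _ ≤ _ := ENNReal.sum_le_tsum _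

theorem lintegral_one_add_log_div_dist_le [MeasurableSpace X] [OpensMeasurableSpace X]
    (μ : Measure X) {s : ℝ} (hs : 0 ≤ s) (y : X) :
    ∫⁻ z in closedBall y s, ENNReal.ofReal (1 + log (s / dist z y)) ∂μ ≤
      μ (closedBall y s) + ENNReal.ofReal (log 2) * ∑' n : ℕ, μ (closedBall y (s / 2 ^ n)) := by
  calc ∫⁻ z in closedBall y s, ENNReal.ofReal (1 + log (s / dist z y)) ∂μ
      ≤ ∫⁻ z in closedBall y s, 1 + ∑' n : ℕ,
          (closedBall y (s / 2 ^ n)).indicator (fun _ ↦ ENNReal.ofReal (log 2)) z ∂μ :=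
        lintegral_mono fun z ↦ ENNReal.ofReal_add_le.trans <| by
          rw [ENNReal.ofReal_one]; gcongr; exact ofReal_log_div_dist_le_tsum_indicator hs y z
    _ = μ (closedBall y s) +
          ∑' n : ℕ, ENNReal.ofReal (log 2) *
            μ.restrict (closedBall y s) (closedBall y (s / 2 ^ n)) := by
        rw [lintegral_add_left measurable_const, setLIntegral_one, lintegral_tsum fun n ↦
          (measurable_const.indicator measurableSet_closedBall).aemeasurable]
        simp_rw [lintegral_indicator_const measurableSet_closedBall]
    _ ≤ _ := by
        rw [← ENNReal.tsum_mul_left]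
        gcongr
        exact Measure.restrict_le_self

theorem div_two_pow_rpow {s : ℝ} (hs : 0 ≤ s) (β : ℝ) (n : ℕ) :
    (s / 2 ^ n) ^ β = s ^ β * ((2 : ℝ) ^ (-β)) ^ n := by
  rw [div_rpow hs (by positivity), ← rpow_natCast_mul zero_le_two, mul_comm,
    rpow_mul_natCast zero_le_two, rpow_neg zero_le_two, inv_pow, div_eq_mul_inv]

theorem tsum_measure_closedBall_div_two_pow_le [MeasurableSpace X] (μ : Measure X)
    {β K s : ℝ} (hβ : 0 < β) (hs : 0 < s) (y : X)
    (hball : ∀ r ∈ Ioc 0 s, μ (closedBall y r) ≤ ENNReal.ofReal (K * r ^ β)) :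
    ∑' n : ℕ, μ (closedBall y (s / 2 ^ n)) ≤ ENNReal.ofReal (K * s ^ β / (1 - 2 ^ (-β))) := by
  set q : ℝ := 2 ^ (-β)
  have hq : 0 < 1 - q := one_sub_two_rpow_neg_pos hβ
  calc ∑' n : ℕ, μ (closedBall y (s / 2 ^ n))
      ≤ ∑' n : ℕ, ENNReal.ofReal (K * s ^ β) * ENNReal.ofReal q ^ n := by
        gcongr with n
        have hr : s / 2 ^ n ∈ Ioc 0 s :=
          ⟨by positivity, div_le_self hs.le (one_le_pow₀ one_le_two)⟩
        refine (hball _ hr).trans_eq ?_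
        rw [div_two_pow_rpow hs.le, ← mul_assoc, ← ENNReal.ofReal_pow (by positivity),
          ENNReal.ofReal_mul' (by positivity)]
    _ = ENNReal.ofReal (K * s ^ β / (1 - q)) := by
        rw [ENNReal.tsum_mul_left, ENNReal.tsum_geometric, div_eq_mul_inv,
          ENNReal.ofReal_mul' (inv_nonneg.2 hq.le),
          ENNReal.ofReal_inv_of_pos hq, ENNReal.ofReal_sub _ (by positivity),
          ENNReal.ofReal_one]

theorem lintegral_one_add_log_div_dist_le_of_measure_closedBall_le [MeasurableSpace X]
    [OpensMeasurableSpace X] (μ : Measure X) {β K s : ℝ} (hβ : 0 < β) (hK : 0 ≤ K) (hs : 0 < s)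
    (y : X) (hball : ∀ r ∈ Ioc 0 s, μ (closedBall y r) ≤ ENNReal.ofReal (K * r ^ β)) :
    ∫⁻ z in closedBall y s, ENNReal.ofReal (1 + log (s / dist z y)) ∂μ ≤
      ENNReal.ofReal ((1 + log 2 / (1 - 2 ^ (-β))) * K * s ^ β) := by
  have hq := one_sub_two_rpow_neg_pos hβ
  calc ∫⁻ z in closedBall y s, ENNReal.ofReal (1 + log (s / dist z y)) ∂μ
      ≤ μ (closedBall y s) + ENNReal.ofReal (log 2) * ∑' n : ℕ, μ (closedBall y (s / 2 ^ n)) :=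
        lintegral_one_add_log_div_dist_le μ hs.le y
    _ ≤ ENNReal.ofReal (K * s ^ β) +
          ENNReal.ofReal (log 2) * ENNReal.ofReal (K * s ^ β / (1 - 2 ^ (-β))) := by
        gcongr
        · exact hball s ⟨hs, le_rfl⟩
        · exact tsum_measure_closedBall_div_two_pow_le μ hβ hs y hball
    _ = ENNReal.ofReal ((1 + log 2 / (1 - 2 ^ (-β))) * K * s ^ β) := by
        rw [← ENNReal.ofReal_mul (log_nonneg one_le_two), ← ENNReal.ofReal_add (by positivity)
          (by positivity)]
        congr 1
        ring

end

/-- Logarithmic integral estimate against a measure with power-law ball decay: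
for every `β > 0` there is `C(β) > 0` such that for every Borel measure `μ` on
`ℝ²`, every `y`, every `K ≥ 0` and every `t ∈ (0,1]`, if `μ(B(y,r)) ≤ K r^β` for
all `r ∈ (0,2]`, then
`∫_{B(y,√t)} (1 + ln(√t/|z-y|)) dμ(z) ≤ C(β) K t^{β/2}`. -/
theorem log_integral_power_law_bound (β : ℝ) (hβ : 0 < β) :
    ∃ C > (0 : ℝ), ∀ (μ : Measure (EuclideanSpace ℝ (Fin 2)))
      (y : EuclideanSpace ℝ (Fin 2)) (K : ℝ), 0 ≤ K →
      ∀ t ∈ Set.Ioc (0 : ℝ) 1,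
      (∀ r ∈ Set.Ioc (0 : ℝ) 2,
        μ (Metric.closedBall y r) ≤ ENNReal.ofReal (K * r ^ β)) →
      (∫⁻ z in Metric.closedBall y (Real.sqrt t),
          ENNReal.ofReal (1 + Real.log (Real.sqrt t / dist z y)) ∂μ) ≤
        ENNReal.ofReal (C * K * t ^ (β / 2)) := by
  have hq := one_sub_two_rpow_neg_pos hβ
  refine ⟨1 + log 2 / (1 - 2 ^ (-β)), by positivity, fun μ y K hK t ⟨ht0, ht1⟩ hball ↦ ?_⟩
  have hst : √t ^ β = t ^ (β / 2) := by
    rw [sqrt_eq_rpow, ← rpow_mul ht0.le, one_div_mul_eq_div]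
  have hball' : ∀ r ∈ Ioc 0 √t, μ (Metric.closedBall y r) ≤ ENNReal.ofReal (K * r ^ β) :=
    fun r hr ↦ hball r ⟨hr.1, hr.2.trans ((sqrt_le_one.2 ht1).trans one_le_two)⟩
  rw [← hst]
  exact lintegral_one_add_log_div_dist_le_of_measure_closedBall_le μ hβ hK (sqrt_pos.2 ht0) y
    hball'
end

section
/- There exists a constant C > 0 such that for every Borel measure μ on ℝ², every x, y ∈ ℝ² with |y−x| ≤ 1, every δ ∈ (0,1/2) and every t ∈ (0,1]: ∫_{{ z : |z−y| ≥ t^{1/2} }} exp( −|z−y|²/t ) dμ(z) ≤ μ( B(y, t^{1/2−δ}) ) + exp( −t^{−2δ} ) · μ( B(x,4) ) + C·t²·∫_{ℝ²} exp( −|z−x|²/2 ) dμ(z). -/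
/-!
Split the domain of integration into three regimes for `s = dist z y`, `r = dist z x`.
Near `y` (`s ≤ t^(1/2-δ)`) the integrand is at most `1`. Between that ball and `B(x,4)` it is
at most `exp(-t^(1-2δ)/t) = exp(-t^(-2δ))`. Far from `x` (`r > 4`) the triangle inequality
gives `s ≥ r - 1`, hence `s² ≥ r²/2 + 1` and `s²/t ≥ r²/2 + 1/t`, so the integrand is at most
`exp(-1/t) exp(-r²/2) ≤ 2t² exp(-r²/2)`.
-/

open MeasureTheory Set Real ENNReal

lemma Real.exp_neg_inv_le_two_mul_sq {t : ℝ} (ht : 0 < t) : exp (-t⁻¹) ≤ 2 * t ^ 2 := by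
  have hquad : (t⁻¹) ^ 2 / 2 ≤ exp t⁻¹ := by
    simpa using pow_div_factorial_le_exp _ (inv_nonneg.2 ht.le) 2
  rw [exp_neg, inv_le_comm₀ (exp_pos _) (by positivity)]
  calc (2 * t ^ 2)⁻¹ = (t⁻¹) ^ 2 / 2 := by field_simp
    _ ≤ exp t⁻¹ := hquad

lemma sq_div_two_add_one_le_sq {r s : ℝ} (hr : 4 ≤ r) (hrs : r - 1 ≤ s) :
    r ^ 2 / 2 + 1 ≤ s ^ 2 := by
  nlinarith

section PseudoMetricSpace

variable {α : Type*} [PseudoMetricSpace α]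

lemma exp_neg_dist_sq_div_le_of_rpow_lt {y z : α} {t δ : ℝ} (ht : 0 < t)
    (hz : t ^ ((1 : ℝ) / 2 - δ) < dist z y) :
    exp (-(dist z y) ^ 2 / t) ≤ exp (-t ^ (-2 * δ)) := by
  have hrpow : t ^ (-2 * δ) = t ^ ((1 : ℝ) / 2 - δ) * t ^ ((1 : ℝ) / 2 - δ) / t := by
    rw [← rpow_add ht, eq_div_iff ht.ne', ← rpow_add_one ht.ne']
    ring_nf
  have hpos : 0 < t ^ ((1 : ℝ) / 2 - δ) := rpow_pos_of_pos ht _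
  rw [exp_le_exp, neg_div, neg_le_neg_iff, hrpow]
  gcongr
  nlinarith

lemma exp_neg_dist_sq_div_le_of_four_lt {x y z : α} {t : ℝ} (ht0 : 0 < t) (ht1 : t ≤ 1)
    (hxy : dist y x ≤ 1) (hz : 4 < dist z x) :
    exp (-(dist z y) ^ 2 / t) ≤ 2 * t ^ 2 * exp (-(dist z x) ^ 2 / 2) := by
  have hsq := sq_div_two_add_one_le_sq (s := dist z y) hz.le (by linarith [dist_triangle z y x])
  have hexponent : (dist z x) ^ 2 / 2 + t⁻¹ ≤ (dist z y) ^ 2 / t := by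
    rw [le_div_iff₀ ht0, add_mul, inv_mul_cancel₀ ht0.ne']
    nlinarith [sq_nonneg (dist z x)]
  calc exp (-(dist z y) ^ 2 / t) ≤ exp (-t⁻¹) * exp (-(dist z x) ^ 2 / 2) := by
        rw [← exp_add, exp_le_exp]
        linarith [neg_div t ((dist z y) ^ 2), neg_div 2 ((dist z x) ^ 2)]
    _ ≤ 2 * t ^ 2 * exp (-(dist z x) ^ 2 / 2) := by
        gcongr
        exact exp_neg_inv_le_two_mul_sq ht0

lemma ofReal_exp_neg_dist_sq_div_le {x y : α} {t δ : ℝ} (ht0 : 0 < t) (ht1 : t ≤ 1)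
    (hxy : dist y x ≤ 1) (z : α) :
    ENNReal.ofReal (exp (-(dist z y) ^ 2 / t)) ≤
      (Metric.closedBall y (t ^ ((1 : ℝ) / 2 - δ))).indicator (fun _ => 1) z +
      (Metric.closedBall x 4).indicator (fun _ => ENNReal.ofReal (exp (-t ^ (-2 * δ)))) z +
      ENNReal.ofReal (2 * t ^ 2) * ENNReal.ofReal (exp (-(dist z x) ^ 2 / 2)) := by
  by_cases hnear : z ∈ Metric.closedBall y (t ^ ((1 : ℝ) / 2 - δ))
  · have hle_one : exp (-(dist z y) ^ 2 / t) ≤ 1 :=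
      exp_le_one_iff.2 (div_nonpos_of_nonpos_of_nonneg (by nlinarith) ht0.le)
    rw [indicator_of_mem hnear, add_assoc]
    exact le_add_right (ofReal_le_one.2 hle_one)
  rw [Metric.mem_closedBall, not_le] at hnear
  by_cases hmid : z ∈ Metric.closedBall x 4
  · rw [indicator_of_mem hmid]
    exact le_add_right (le_add_left (ofReal_le_ofReal
      (exp_neg_dist_sq_div_le_of_rpow_lt ht0 hnear)))
  rw [Metric.mem_closedBall, not_le] at hmid
  rw [← ofReal_mul (by positivity)]
  exact le_add_left (ofReal_le_ofReal (exp_neg_dist_sq_div_le_of_four_lt ht0 ht1 hxy hmid))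

variable [MeasurableSpace α] [OpensMeasurableSpace α]

lemma lintegral_exp_neg_dist_sq_div_le (μ : Measure α) {x y : α} {t : ℝ} (δ : ℝ)
    (ht0 : 0 < t) (ht1 : t ≤ 1) (hxy : dist y x ≤ 1) :
    ∫⁻ z, ENNReal.ofReal (exp (-(dist z y) ^ 2 / t)) ∂μ ≤
      μ (Metric.closedBall y (t ^ ((1 : ℝ) / 2 - δ))) +
      ENNReal.ofReal (exp (-t ^ (-2 * δ))) * μ (Metric.closedBall x 4) +
      ENNReal.ofReal (2 * t ^ 2) * ∫⁻ z, ENNReal.ofReal (exp (-(dist z x) ^ 2 / 2)) ∂μ := by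
  have hnear : MeasurableSet (Metric.closedBall y (t ^ ((1 : ℝ) / 2 - δ))) :=
    measurableSet_closedBall
  have hmid : MeasurableSet (Metric.closedBall x 4) := measurableSet_closedBall
  calc _ ≤ _ := lintegral_mono (ofReal_exp_neg_dist_sq_div_le (δ := δ) ht0 ht1 hxy)
    _ = _ := by
      rw [lintegral_add_left' (by fun_prop), lintegral_add_left (measurable_const.indicator hnear),
        lintegral_indicator_const hnear, lintegral_indicator_const hmid, one_mul,
        lintegral_const_mul' _ _ ofReal_ne_top]

end PseudoMetricSpace

/-- Gaussian tail estimate for a Borel measure on `ℝ²`: there is a universal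
`C > 0` such that for every Borel measure `μ`, all `x, y` with `|y-x| ≤ 1`,
every `δ ∈ (0,1/2)` and every `t ∈ (0,1]`,
`∫_{|z-y| ≥ √t} e^{-|z-y|²/t} dμ(z) ≤ μ(B(y,t^{1/2-δ})) + e^{-t^{-2δ}} μ(B(x,4))
+ C t² ∫ e^{-|z-x|²/2} dμ(z)`. -/
theorem gaussian_tail_measure_bound :
    ∃ C > (0 : ℝ), ∀ (μ : Measure (EuclideanSpace ℝ (Fin 2)))
      (x y : EuclideanSpace ℝ (Fin 2)), dist y x ≤ 1 →
      ∀ δ ∈ Set.Ioo (0 : ℝ) (1 / 2), ∀ t ∈ Set.Ioc (0 : ℝ) 1,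
      (∫⁻ z in {z | Real.sqrt t ≤ dist z y},
          ENNReal.ofReal (Real.exp (-(dist z y) ^ 2 / t)) ∂μ) ≤
        μ (Metric.closedBall y (t ^ ((1 : ℝ) / 2 - δ))) +
        ENNReal.ofReal (Real.exp (-t ^ (-2 * δ))) * μ (Metric.closedBall x 4) +
        ENNReal.ofReal (C * t ^ 2) *
          ∫⁻ z, ENNReal.ofReal (Real.exp (-(dist z x) ^ 2 / 2)) ∂μ :=
  ⟨2, two_pos, fun μ _ _ hxy δ _ _ ⟨ht0, ht1⟩ =>
    (setLIntegral_le_lintegral _ _).trans (lintegral_exp_neg_dist_sq_div_le μ δ ht0 ht1 hxy)⟩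
end
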